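/- ι̃(J(n⃗',k⃗)) ⊆ J(n⃗,k⃗), i.e. the algebra homomorphism ι̃ maps the defining ideal for the data (n⃗',k⃗) into the defining ideal for (n⃗,k⃗). -/

import Mathlib

open MvPolynomial

noncomputable section

variable (n : ℕ)

/-- the variables `x_a[i]`, `1 ≤ a ≤ n-1`, `0 ≤ i ≤ Nb_a - 1`, for a general bound
function `Nb` -/
abbrev IdxB (Nb : Fin (n - 1) → ℕ) : Type := {q : Fin (n - 1) × ℕ // q.2 < Nb q.1}

/-- the polynomial ring `ℂ[x_a[i] : 0 ≤ i ≤ Nb_a - 1]` -/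
abbrev RB (Nb : Fin (n - 1) → ℕ) := MvPolynomial (IdxB n Nb) ℂ

/-- the current `x_a(z) = ∑_{i=0}^{Nb_a-1} x_a[i] z^{Nb_a-1-i}` -/
def xcurB (Nb : Fin (n - 1) → ℕ) (a : Fin (n - 1)) : Polynomial (RB n Nb) :=
  ∑ i ∈ (Finset.range (Nb a)).attach,
    Polynomial.C (X (⟨(a, i.1), Finset.mem_range.mp i.2⟩ : IdxB n Nb)) *
      Polynomial.X ^ (Nb a - 1 - i.1)

/-- `μ(ν, k⃗) = ∑_p max(∑_{a=1}^{n_p-1} ν_a - k_p, 0)` -/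
def muB (N : ℕ) (nn kk : Fin N → ℕ) (ν : Fin (n - 1) → ℕ) : ℕ :=
  ∑ p : Fin N,
    ((∑ a ∈ Finset.univ.filter (fun a : Fin (n - 1) => a.val + 1 < nn p), ν a) - kk p)

/-- the ideal `J(n⃗,k⃗)` generated by the coefficients of `z^j` in `∏_a x_a(z)^{ν_a}`,
over all `ν` and `j < μ(ν,k⃗)` -/
def JB (Nb : Fin (n - 1) → ℕ) (N : ℕ) (nn kk : Fin N → ℕ) : Ideal (RB n Nb) :=
  Ideal.span {c | ∃ (ν : Fin (n - 1) → ℕ) (j : ℕ), j < muB n N nn kk ν ∧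
    c = (∏ a : Fin (n - 1), (xcurB n Nb a) ^ (ν a)).coeff j}

/-- `N_a = #{p : n_p > a}` -/
def NAB (N : ℕ) (nn : Fin N → ℕ) (a : Fin (n - 1)) : ℕ :=
  (Finset.univ.filter (fun p : Fin N => a.val + 1 < nn p)).card

/-!
Under `ι̃`, `x'_b(z) ↦ x_b(z)` for `b ≠ a` and `x'_a(z) ↦ x_a(z) - x_a[0] z^{N_a-1}`.
Expanding the binomial, the image of `∏_b x'_b(z)^{ν_b}` is a combination of the polynomials
`z^{(N_a-1)(ν_a-m)} ∏_b x_b(z)^{ν[a↦m]_b}`, `m ≤ ν_a`, so its coefficient of `z^j` is a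
combination of coefficients of `z^{j-(N_a-1)(ν_a-m)}` in generating products of `J(n⃗,k⃗)`.
These are generators because `μ(ν,k⃗)` computed for `n⃗'` is at most
`μ(ν[a↦m],k⃗) + (N_a-1)(ν_a-m)`: passing from `n_p` to `n_p - 1` removes `ν_a` from the
`p`-th summand of `μ`, which is more than lowering `ν_a` to `m` does, while each of the
other `N_a - 1` summands containing `ν_a` drops by at most `ν_a - m`.
-/

open Polynomial in
theorem Polynomial.prod_pow_eq_sum_of_eq_add {S ι : Type*} [CommRing S] [Fintype ι]
    [DecidableEq ι] (P Q : ι → S[X]) (a : ι) (c : S) (d : ℕ)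
    (hQa : P a = Q a + C c * X ^ d) (hQ : ∀ b ≠ a, Q b = P b) (ν : ι → ℕ) :
    ∏ b, Q b ^ ν b = ∑ m ∈ Finset.range (ν a + 1),
      C ((ν a).choose m * (-c) ^ (ν a - m)) * (∏ b, P b ^ Function.update ν a m b) *
        X ^ (d * (ν a - m)) := by
  have hrest : ∀ m, ∏ b ∈ Finset.univ.erase a, P b ^ Function.update ν a m b =
      ∏ b ∈ Finset.univ.erase a, Q b ^ ν b :=
    fun m => Finset.prod_congr rfl fun b hb => by
      rw [Function.update_of_ne (Finset.ne_of_mem_erase hb), hQ b (Finset.ne_of_mem_erase hb)]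
  rw [← Finset.mul_prod_erase _ _ (Finset.mem_univ a),
    show Q a = P a + C (-c) * X ^ d by rw [hQa, C_neg]; ring, add_pow, Finset.sum_mul]
  refine Finset.sum_congr rfl fun m _ => ?_
  rw [← Finset.mul_prod_erase _ _ (Finset.mem_univ a), hrest, Function.update_self]
  simp only [map_mul, map_pow, map_natCast, mul_pow, pow_mul]
  ring

open Polynomial in
theorem Polynomial.coeff_prod_pow_mem_of_eq_add {S ι : Type*} [CommRing S] [Fintype ι]
    [DecidableEq ι] (I : Ideal S) (P Q : ι → S[X]) (a : ι) (c : S) (d : ℕ)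
    (hQa : P a = Q a + C c * X ^ d) (hQ : ∀ b ≠ a, Q b = P b) (ν : ι → ℕ) (j : ℕ)
    (hP : ∀ m ≤ ν a, d * (ν a - m) ≤ j →
      (∏ b, P b ^ Function.update ν a m b).coeff (j - d * (ν a - m)) ∈ I) :
    (∏ b, Q b ^ ν b).coeff j ∈ I := by
  rw [prod_pow_eq_sum_of_eq_add P Q a c d hQa hQ, finsetSum_coeff]
  refine Ideal.sum_mem _ fun m hm => ?_
  rw [mul_assoc, coeff_C_mul, coeff_mul_X_pow']
  split_ifs with hj
  · exact I.mul_mem_left _ (hP m (by simpa [Nat.lt_succ_iff] using hm) hj)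
  · rw [mul_zero]; exact I.zero_mem

/-- `x_b[i]`, extended by `0` to `i ≥ Nb b`. -/
def xVarB (Nb : Fin (n - 1) → ℕ) (b : Fin (n - 1)) (i : ℕ) : RB n Nb :=
  if h : i < Nb b then X ⟨(b, i), h⟩ else 0

abbrev decAt (Nb : Fin (n - 1) → ℕ) (a : Fin (n - 1)) : Fin (n - 1) → ℕ :=
  fun b => Nb b - if b = a then 1 else 0

def shiftIdx (Nb : Fin (n - 1) → ℕ) (a : Fin (n - 1)) : IdxB n (decAt n Nb a) → IdxB n Nb :=
  fun q => ⟨(q.1.1, q.1.2 + if q.1.1 = a then 1 else 0), by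
    have h2 : q.1.2 < Nb q.1.1 - if q.1.1 = a then 1 else 0 := q.2
    show q.1.2 + (if q.1.1 = a then 1 else 0) < Nb q.1.1
    split_ifs at h2 ⊢ <;> omega⟩

theorem xcurB_eq_sum_range (Nb : Fin (n - 1) → ℕ) (b : Fin (n - 1)) :
    xcurB n Nb b = ∑ i ∈ Finset.range (Nb b),
      Polynomial.C (xVarB n Nb b i) * Polynomial.X ^ (Nb b - 1 - i) := by
  rw [xcurB, ← Finset.sum_attach _ fun i =>
    Polynomial.C (xVarB n Nb b i) * Polynomial.X ^ (Nb b - 1 - i)]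
  refine Finset.sum_congr rfl fun i _ => ?_
  rw [xVarB, dif_pos (Finset.mem_range.mp i.2)]

theorem rename_shiftIdx_xVarB (Nb : Fin (n - 1) → ℕ) (a b : Fin (n - 1)) (i : ℕ) :
    rename (shiftIdx n Nb a) (xVarB n (decAt n Nb a) b i) =
      xVarB n Nb b (i + if b = a then 1 else 0) := by
  by_cases h : i < decAt n Nb a b
  · have hi : i + (if b = a then 1 else 0) < Nb b := (shiftIdx n Nb a ⟨(b, i), h⟩).2
    rw [xVarB, dif_pos h, rename_X, xVarB, dif_pos hi]
    rfl
  · have hi : ¬ i + (if b = a then 1 else 0) < Nb b := by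
      simp only [decAt] at h; split_ifs at h ⊢ <;> omega
    rw [xVarB, dif_neg h, map_zero, xVarB, dif_neg hi]

theorem map_rename_shiftIdx_xcurB_of_ne (Nb : Fin (n - 1) → ℕ) {a b : Fin (n - 1)} (hb : b ≠ a) :
    (xcurB n (decAt n Nb a) b).map (rename (shiftIdx n Nb a)).toRingHom = xcurB n Nb b := by
  have hdec : decAt n Nb a b = Nb b := by simp only [decAt, if_neg hb, Nat.sub_zero]
  rw [xcurB_eq_sum_range, xcurB_eq_sum_range, Polynomial.map_sum, hdec]
  refine Finset.sum_congr rfl fun i _ => ?_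
  simp [rename_shiftIdx_xVarB, hb]

theorem xcurB_eq_map_rename_shiftIdx_add (Nb : Fin (n - 1) → ℕ) (a : Fin (n - 1)) :
    xcurB n Nb a = (xcurB n (decAt n Nb a) a).map (rename (shiftIdx n Nb a)).toRingHom +
      Polynomial.C (xVarB n Nb a 0) * Polynomial.X ^ (Nb a - 1) := by
  rcases hm : Nb a with _ | m
  · simp [xcurB_eq_sum_range, xVarB, hm]
  have hdec : decAt n Nb a a = m := by simp [decAt, hm]
  rw [xcurB_eq_sum_range, xcurB_eq_sum_range, Polynomial.map_sum, hdec, hm,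
    Finset.sum_range_succ']
  refine congrArg₂ (· + ·) (Finset.sum_congr rfl fun i _ => ?_) (by simp)
  simp only [Polynomial.map_mul, Polynomial.map_pow, Polynomial.map_C, Polynomial.map_X,
    AlgHom.toRingHom_eq_coe, RingHom.coe_coe, rename_shiftIdx_xVarB, if_pos]
  congr 2
  omega

theorem rename_shiftIdx_mem_JB (Nb : Fin (n - 1) → ℕ) (N : ℕ) (nn' kk' nn kk : Fin N → ℕ)
    (a : Fin (n - 1))
    (hμ : ∀ ν m, m ≤ ν a → muB n N nn' kk' ν ≤
      muB n N nn kk (Function.update ν a m) + (Nb a - 1) * (ν a - m))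
    {u : RB n (decAt n Nb a)} (hu : u ∈ JB n (decAt n Nb a) N nn' kk') :
    rename (shiftIdx n Nb a) u ∈ JB n Nb N nn kk := by
  suffices JB n (decAt n Nb a) N nn' kk' ≤
      (JB n Nb N nn kk).comap (rename (R := ℂ) (shiftIdx n Nb a)).toRingHom from this hu
  refine Ideal.span_le.mpr ?_
  rintro _ ⟨ν, j, hj, rfl⟩
  rw [SetLike.mem_coe, Ideal.mem_comap, ← Polynomial.coeff_map, Polynomial.map_prod]
  simp only [Polynomial.map_pow]
  refine Polynomial.coeff_prod_pow_mem_of_eq_add _ (xcurB n Nb)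
    (fun b => (xcurB n (decAt n Nb a) b).map (rename (shiftIdx n Nb a)).toRingHom) a
    (xVarB n Nb a 0) (Nb a - 1)
    (xcurB_eq_map_rename_shiftIdx_add n Nb a)
    (fun b hb => map_rename_shiftIdx_xcurB_of_ne n Nb hb) ν j fun m hm hjm => ?_
  exact Ideal.subset_span ⟨_, _, by have := hμ ν m hm; omega, rfl⟩

/-- `∑_{b=1}^{r-1} ν_b`, the summand of `μ` belonging to a part with `n_p = r` -/
def levelSum (ν : Fin (n - 1) → ℕ) (r : ℕ) : ℕ :=
  ∑ b ∈ Finset.univ.filter (fun b : Fin (n - 1) => b.val + 1 < r), ν b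

theorem muB_eq_sum_levelSum (N : ℕ) (nn kk : Fin N → ℕ) (ν : Fin (n - 1) → ℕ) :
    muB n N nn kk ν = ∑ s, (levelSum n ν (nn s) - kk s) := rfl

theorem levelSum_update_add (ν : Fin (n - 1) → ℕ) (a : Fin (n - 1)) {m : ℕ} (hm : m ≤ ν a)
    (r : ℕ) :
    levelSum n (Function.update ν a m) r + (if a.val + 1 < r then ν a - m else 0) =
      levelSum n ν r := by
  unfold levelSum
  split_ifs with h
  · have ha : a ∈ Finset.univ.filter (fun b : Fin (n - 1) => b.val + 1 < r) := by simpa using h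
    rw [Finset.sum_update_of_mem ha, Finset.sdiff_singleton_eq_erase,
      ← Finset.add_sum_erase _ ν ha]
    omega
  · have ha : a ∉ Finset.univ.filter (fun b : Fin (n - 1) => b.val + 1 < r) := by simpa using h
    rw [Finset.sum_update_of_notMem ha, add_zero]

theorem levelSum_add_two (ν : Fin (n - 1) → ℕ) (a : Fin (n - 1)) :
    levelSum n ν (a.val + 2) = levelSum n ν (a.val + 1) + ν a := by
  have hins : Finset.univ.filter (fun b : Fin (n - 1) => b.val + 1 < a.val + 2) =
      insert a (Finset.univ.filter fun b : Fin (n - 1) => b.val + 1 < a.val + 1) := by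
    ext b
    simp only [Finset.mem_filter, Finset.mem_insert, Finset.mem_univ, true_and, Fin.ext_iff]
    omega
  rw [levelSum, hins, Finset.sum_insert (by simp), add_comm]
  rfl

theorem muB_update_le (N : ℕ) (nn kk : Fin N → ℕ) (p : Fin N) (a : Fin (n - 1))
    (ha : a.val + 2 = nn p) (ν : Fin (n - 1) → ℕ) {m : ℕ} (hm : m ≤ ν a) :
    muB n N (Function.update nn p (nn p - 1)) kk ν ≤
      muB n N nn kk (Function.update ν a m) + (NAB n N nn a - 1) * (ν a - m) := by
  have hpoint : ∀ s, levelSum n ν (Function.update nn p (nn p - 1) s) - kk s ≤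
      (levelSum n (Function.update ν a m) (nn s) - kk s) +
        if s ≠ p ∧ a.val + 1 < nn s then ν a - m else 0 := by
    intro s
    have hupd := levelSum_update_add n ν a hm (nn s)
    by_cases hs : s = p
    · subst hs
      have htop := levelSum_add_two n ν a
      rw [← ha, if_pos (by omega)] at hupd
      rw [Function.update_self, ← ha, if_neg (by simp), show a.val + 2 - 1 = a.val + 1 by omega]
      omega
    · rw [Function.update_of_ne hs]
      split_ifs at hupd ⊢ <;> omega
  have hcard : (Finset.univ.filter fun s => s ≠ p ∧ a.val + 1 < nn s).card =
      NAB n N nn a - 1 := by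
    have hp : p ∈ Finset.univ.filter fun s => a.val + 1 < nn s := by simp; omega
    rw [NAB, ← Finset.card_erase_of_mem hp]
    congr 1
    ext s
    simp
  rw [muB_eq_sum_levelSum, muB_eq_sum_levelSum]
  calc ∑ s, (levelSum n ν (Function.update nn p (nn p - 1) s) - kk s)
      ≤ ∑ s, ((levelSum n (Function.update ν a m) (nn s) - kk s) +
          if s ≠ p ∧ a.val + 1 < nn s then ν a - m else 0) :=
        Finset.sum_le_sum fun s _ => hpoint s
    _ = ∑ s, (levelSum n (Function.update ν a m) (nn s) - kk s) +
          (NAB n N nn a - 1) * (ν a - m) := by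
      rw [Finset.sum_add_distrib, ← Finset.sum_filter, Finset.sum_const, smul_eq_mul, hcard]

theorem stmt6 (n N : ℕ) (nn kk : Fin N → ℕ) (p : Fin N) (a : Fin (n - 1))
    (ha : a.val + 2 = nn p) :
    ∀ u ∈ JB n (fun b => NAB n N nn b - (if b = a then 1 else 0)) N
        (Function.update nn p (nn p - 1)) kk,
      rename
        (fun q : IdxB n (fun b => NAB n N nn b - (if b = a then 1 else 0)) =>
          (⟨(q.1.1, q.1.2 + if q.1.1 = a then 1 else 0), by
            have h2 := q.2
            by_cases h : q.1.1 = a <;> simp only [h, if_pos, if_neg, if_true, if_false] at h2 ⊢ <;> omega⟩ :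
            IdxB n (NAB n N nn))) u
        ∈ JB n (NAB n N nn) N nn kk :=
  fun _ hu => rename_shiftIdx_mem_JB n (NAB n N nn) N _ kk nn kk a
    (fun ν _ hm => muB_update_le n N nn kk p a ha ν hm) hu

end
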